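/- arXiv:1307.3971 — 3 statements merged into one kernel-verified Lean document; each statement's English description precedes it below -/
import Mathlib

section
/- For the connection ∇ defined from Γ, the curvature R(X,Y)Z = ∇_X∇_Y Z − ∇_Y∇_X Z − ∇_{[X,Y]}Z satisfies R(∂x,∂y)∂y = ((2m·m_{xy} − 2m_x m_y)/m²)·∂y at every point of ℝ², so that g(R(∂x,∂y)∂y, ∂x) = 2m_x m_y − 2m·m_{xy}, and consequently the Gaussian curvature K := g(R(∂x,∂y)∂y, ∂x) / (g(∂x,∂x)g(∂y,∂y) − g(∂x,∂y)²) equals (2m·m_{xy} − 2m_x m_y)/m⁴. -/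
/-- First partial derivative (in the `x` direction). -/
noncomputable def pd1 (f : ℝ × ℝ → ℝ) (p : ℝ × ℝ) : ℝ := fderiv ℝ f p (1, 0)

/-- Second partial derivative (in the `y` direction). -/
noncomputable def pd2 (f : ℝ × ℝ → ℝ) (p : ℝ × ℝ) : ℝ := fderiv ℝ f p (0, 1)

/-- The Lorentzian metric `g = −m²(dx⊗dy + dy⊗dx)`. -/
noncomputable def metG (m : ℝ × ℝ → ℝ) (p : ℝ × ℝ) (a b : ℝ × ℝ) : ℝ :=
  -(m p)^2 * (a.1 * b.2 + a.2 * b.1)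

/-- The symmetric bilinear Christoffel map determined by
`Γ(∂x,∂x) = (2m_x/m)∂x`, `Γ(∂x,∂y) = 0`, `Γ(∂y,∂y) = (2m_y/m)∂y`. -/
noncomputable def Gam (m : ℝ × ℝ → ℝ) (p : ℝ × ℝ) (a b : ℝ × ℝ) : ℝ × ℝ :=
  ((2 * pd1 m p / m p) * (a.1 * b.1), (2 * pd2 m p / m p) * (a.2 * b.2))

/-- The connection `(∇_X Y)(p) = (DY)_p(X(p)) + Γ_p(X(p), Y(p))`. -/
noncomputable def nabla (m : ℝ × ℝ → ℝ) (X Y : ℝ × ℝ → ℝ × ℝ) (p : ℝ × ℝ) : ℝ × ℝ :=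
  fderiv ℝ Y p (X p) + Gam m p (X p) (Y p)

/-- The Lie bracket of vector fields on `ℝ²`:
`[X,Y](p) = (DY)_p(X(p)) − (DX)_p(Y(p))`. -/
noncomputable def brk (X Y : ℝ × ℝ → ℝ × ℝ) (p : ℝ × ℝ) : ℝ × ℝ :=
  fderiv ℝ Y p (X p) - fderiv ℝ X p (Y p)

/-- The curvature `R(X,Y)Z = ∇_X ∇_Y Z − ∇_Y ∇_X Z − ∇_{[X,Y]} Z`. -/
noncomputable def curv (m : ℝ × ℝ → ℝ) (X Y Z : ℝ × ℝ → ℝ × ℝ) (p : ℝ × ℝ) : ℝ × ℝ :=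
  nabla m X (nabla m Y Z) p - nabla m Y (nabla m X Z) p - nabla m (brk X Y) Z p

/-- The constant coordinate vector field `∂x`. -/
def dx : ℝ × ℝ → ℝ × ℝ := fun _ => (1, 0)

/-- The constant coordinate vector field `∂y`. -/
def dy : ℝ × ℝ → ℝ × ℝ := fun _ => (0, 1)

/-- `R(∂x,∂y)∂y = ((2m m_{xy} − 2m_x m_y)/m²) ∂y`, hence
`g(R(∂x,∂y)∂y, ∂x) = 2m_x m_y − 2m m_{xy}` and the Gaussian curvature
`K = g(R(∂x,∂y)∂y,∂x)/(g(∂x,∂x)g(∂y,∂y) − g(∂x,∂y)²)` equals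
`(2m m_{xy} − 2m_x m_y)/m⁴`. -/
theorem stmt_2 (m : ℝ × ℝ → ℝ) (hm : ContDiff ℝ (⊤ : ℕ∞) m) (hmpos : ∀ p, 0 < m p) :
    ∀ p : ℝ × ℝ,
      curv m dx dy dy p
          = ((2 * m p * pd2 (pd1 m) p - 2 * pd1 m p * pd2 m p) / (m p)^2) • ((0 : ℝ), (1 : ℝ)) ∧
      metG m p (curv m dx dy dy p) (1, 0)
          = 2 * pd1 m p * pd2 m p - 2 * m p * pd2 (pd1 m) p ∧
      metG m p (curv m dx dy dy p) (1, 0) /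
          (metG m p (dx p) (dx p) * metG m p (dy p) (dy p) - (metG m p (dx p) (dy p))^2)
        = (2 * m p * pd2 (pd1 m) p - 2 * pd1 m p * pd2 m p) / (m p)^4 := by

  intro p
  have hmp : m p ≠ 0 := (hmpos p).ne'
  have hm2 : ContDiff ℝ (⊤ : ℕ∞) (fderiv ℝ m) := hm.fderiv_right (by simp)
  have hpd2 : ContDiff ℝ (⊤ : ℕ∞) (pd2 m) := hm2.clm_apply contDiff_const
  have hdm : HasFDerivAt (fderiv ℝ m) (fderiv ℝ (fderiv ℝ m) p) p :=
    (hm2.differentiable (by simp) p).hasFDerivAt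
  have hmm : HasFDerivAt m (fderiv ℝ m p) p := (hm.differentiable (by simp) p).hasFDerivAt
  have hgm : HasFDerivAt (pd2 m) (fderiv ℝ (pd2 m) p) p :=
    (hpd2.differentiable (by simp) p).hasFDerivAt
  -- symmetry of second derivatives
  have key : fderiv ℝ (pd2 m) p (1, 0) = pd2 (pd1 m) p := by
    have h1 : fderiv ℝ (fun q => fderiv ℝ m q ((0:ℝ),(1:ℝ))) p (1,0)
        = fderiv ℝ (fderiv ℝ m) p (1,0) (0,1) := by
      rw [(hdm.clm_apply (hasFDerivAt_const ((0:ℝ),(1:ℝ)) p)).fderiv]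
      simp
    have h2 : fderiv ℝ (fun q => fderiv ℝ m q ((1:ℝ),(0:ℝ))) p (0,1)
        = fderiv ℝ (fderiv ℝ m) p (0,1) (1,0) := by
      rw [(hdm.clm_apply (hasFDerivAt_const ((1:ℝ),(0:ℝ)) p)).fderiv]
      simp
    have hsymm : fderiv ℝ (fderiv ℝ m) p (1,0) (0,1) = fderiv ℝ (fderiv ℝ m) p (0,1) (1,0) :=
      (hm.contDiffAt.isSymmSndFDerivAt (by rw [minSmoothness_of_isRCLikeNormedField]; exact WithTop.coe_le_coe.mpr le_top)) _ _
    show fderiv ℝ (fun q => fderiv ℝ m q ((0:ℝ),(1:ℝ))) p (1,0) = _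
    rw [h1, hsymm, ← h2]
    rfl
  -- derivative of the coefficient 2 m_y / m
  have hinv : HasFDerivAt (fun q => (m q)⁻¹) ((-(m p ^ 2)⁻¹) • fderiv ℝ m p) p := by
    exact (hasDerivAt_inv hmp).comp_hasFDerivAt p hmm
  have hc : HasFDerivAt (fun q => 2 * pd2 m q) ((2:ℝ) • fderiv ℝ (pd2 m) p) p := hgm.const_mul 2
  have hf : HasFDerivAt (fun q => 2 * pd2 m q / m q)
      ((2 * pd2 m p) • ((-(m p ^ 2)⁻¹) • fderiv ℝ m p)
        + (m p)⁻¹ • ((2:ℝ) • fderiv ℝ (pd2 m) p)) p := by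
    simpa [div_eq_mul_inv, Pi.mul_def] using hc.mul hinv
  have hdx : ∀ q : ℝ × ℝ, fderiv ℝ dx q = 0 := fun q => (hasFDerivAt_const ((1:ℝ),(0:ℝ)) q).fderiv
  have hdy : ∀ q : ℝ × ℝ, fderiv ℝ dy q = 0 := fun q => (hasFDerivAt_const ((0:ℝ),(1:ℝ)) q).fderiv
  have hV : (nabla m dy dy) = fun q => ((0:ℝ), 2 * pd2 m q / m q) := by
    funext q
    simp [nabla, Gam, dy, hdy, Prod.ext_iff]
  have h0 : nabla m dx dy = fun _ => ((0:ℝ),(0:ℝ)) := by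
    funext q
    simp [nabla, Gam, dx, dy, hdy, Prod.ext_iff]
  have hbrk : brk dx dy = fun _ => ((0:ℝ),(0:ℝ)) := by
    funext q
    simp [brk, dx, dy, hdx, hdy, Prod.ext_iff]
  have hterm2 : nabla m dy (nabla m dx dy) p = 0 := by
    rw [h0]
    simp [nabla, Gam, dy, hdy, Prod.ext_iff]
  have hterm3 : nabla m (brk dx dy) dy p = 0 := by
    rw [hbrk]
    simp [nabla, Gam, dy, hdy, Prod.ext_iff]
  have hprod : HasFDerivAt (fun q => (((0:ℝ)), 2 * pd2 m q / m q))
      (ContinuousLinearMap.prod 0 ((2 * pd2 m p) • ((-(m p ^ 2)⁻¹) • fderiv ℝ m p)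
        + (m p)⁻¹ • ((2:ℝ) • fderiv ℝ (pd2 m) p))) p :=
    HasFDerivAt.prodMk (hasFDerivAt_const (0:ℝ) p) hf
  have hmain : nabla m dx (nabla m dy dy) p
      = ((0:ℝ), 2 * pd2 m p * (-(m p ^ 2)⁻¹ * pd1 m p)
          + (m p)⁻¹ * (2 * fderiv ℝ (pd2 m) p (1,0))) := by
    rw [hV]
    simp only [nabla, hprod.fderiv, dx]
    simp [Gam, Prod.ext_iff, pd1]
  have hcurv : curv m dx dy dy p
      = ((2 * m p * pd2 (pd1 m) p - 2 * pd1 m p * pd2 m p) / (m p)^2) • ((0:ℝ), (1:ℝ)) := by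
    show nabla m dx (nabla m dy dy) p - nabla m dy (nabla m dx dy) p
        - nabla m (brk dx dy) dy p = _
    rw [hmain, hterm2, hterm3, key]
    simp only [Prod.smul_mk, smul_eq_mul, sub_zero, Prod.ext_iff]
    constructor
    · ring
    · field_simp
      ring
  refine ⟨hcurv, ?_, ?_⟩
  · rw [hcurv]
    simp only [metG, Prod.smul_mk, smul_eq_mul]
    field_simp
    ring
  · rw [hcurv]
    simp only [metG, dx, dy, Prod.smul_mk, smul_eq_mul]
    have h4 : (m p)^4 ≠ 0 := pow_ne_zero _ hmp
    field_simp
    ring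
end

section
/- Suppose the smooth functions on U satisfy the Wirtinger-angle equations (W) and the two Codazzi equations (C2) and (C3). Then the Ricci equation (R) holds on U if and only if the identity γλ + βμ − 2δφ = 2(m·m_{xy} − m_x m_y)/m⁴ − K̃ − (tanh α)(sech α)(S + T) holds on U. In particular, substituting the consequences of (W) and of (C2),(C3) into the Ricci equation transforms it into this Gauss-type equation. -/
lemma tanh_sq_add_inv_cosh_sq (x : ℝ) :
    Real.tanh x ^ 2 + ((Real.cosh x)⁻¹) ^ 2 = 1 := by
  have hc := Real.cosh_pos x
  rw [Real.tanh_eq_sinh_div_cosh]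
  have h := Real.cosh_sq x
  field_simp
  linarith

lemma pd_diffAt {U : Set (ℝ × ℝ)} (hU : IsOpen U) {f : ℝ × ℝ → ℝ}
    (hf : ContDiffOn ℝ (⊤ : ℕ∞) f U) {p : ℝ × ℝ} (hp : p ∈ U) :
    DifferentiableAt ℝ f p :=
  (hf.contDiffAt (hU.mem_nhds hp)).differentiableAt (by simp)

lemma pd_symm {U : Set (ℝ × ℝ)} (hU : IsOpen U) {f : ℝ × ℝ → ℝ}
    (hf : ContDiffOn ℝ (⊤ : ℕ∞) f U) {p : ℝ × ℝ} (hp : p ∈ U) :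
    pd2 (pd1 f) p = pd1 (pd2 f) p := by
  have hfa : ContDiffAt ℝ (⊤ : ℕ∞) f p := hf.contDiffAt (hU.mem_nhds hp)
  have hsymm : IsSymmSndFDerivAt ℝ f p := hfa.isSymmSndFDerivAt (by rw [minSmoothness_of_isRCLikeNormedField]; exact WithTop.coe_le_coe.mpr le_top)
  have hd : DifferentiableAt ℝ (fderiv ℝ f) p :=
    (hfa.fderiv_right (m := 1) (WithTop.coe_le_coe.mpr le_top)).differentiableAt one_ne_zero
  have h1 : pd2 (pd1 f) p = fderiv ℝ (fderiv ℝ f) p (0, 1) (1, 0) := by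
    unfold pd1 pd2
    rw [show (fun q => fderiv ℝ f q (1, 0)) = fun q => (fderiv ℝ f q) ((fun _ => ((1 : ℝ), (0 : ℝ))) q) from rfl,
      fderiv_clm_apply hd (differentiableAt_const _)]
    simp
  have h2 : pd1 (pd2 f) p = fderiv ℝ (fderiv ℝ f) p (1, 0) (0, 1) := by
    unfold pd1 pd2
    rw [show (fun q => fderiv ℝ f q (0, 1)) = fun q => (fderiv ℝ f q) ((fun _ => ((0 : ℝ), (1 : ℝ))) q) from rfl,
      fderiv_clm_apply hd (differentiableAt_const _)]
    simp
  rw [h1, h2, hsymm.eq]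

lemma pd1_mul_sub {m f g : ℝ × ℝ → ℝ} {p : ℝ × ℝ}
    (hm : DifferentiableAt ℝ m p) (hf : DifferentiableAt ℝ f p)
    (hg : DifferentiableAt ℝ g p) :
    pd1 (fun q => m q * (f q - g q)) p
      = pd1 m p * (f p - g p) + m p * (pd1 f p - pd1 g p) := by
  unfold pd1
  rw [fderiv_fun_mul hm (show DifferentiableAt ℝ (fun q => f q - g q) p from hf.sub hg), fderiv_fun_sub hf hg]
  simp [smul_eq_mul]
  ring

lemma pd2_mul_sub {m f g : ℝ × ℝ → ℝ} {p : ℝ × ℝ}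
    (hm : DifferentiableAt ℝ m p) (hf : DifferentiableAt ℝ f p)
    (hg : DifferentiableAt ℝ g p) :
    pd2 (fun q => m q * (f q - g q)) p
      = pd2 m p * (f p - g p) + m p * (pd2 f p - pd2 g p) := by
  unfold pd2
  rw [fderiv_fun_mul hm (show DifferentiableAt ℝ (fun q => f q - g q) p from hf.sub hg), fderiv_fun_sub hf hg]
  simp [smul_eq_mul]
  ring

lemma pd1_congr {U : Set (ℝ × ℝ)} (hU : IsOpen U) {f g : ℝ × ℝ → ℝ}
    (h : ∀ q ∈ U, f q = g q) {p : ℝ × ℝ} (hp : p ∈ U) : pd1 f p = pd1 g p := by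
  unfold pd1
  rw [Filter.EventuallyEq.fderiv_eq (Filter.eventuallyEq_of_mem (hU.mem_nhds hp) h)]

lemma pd2_congr {U : Set (ℝ × ℝ)} (hU : IsOpen U) {f g : ℝ × ℝ → ℝ}
    (h : ∀ q ∈ U, f q = g q) {p : ℝ × ℝ} (hp : p ∈ U) : pd2 f p = pd2 g p := by
  unfold pd2
  rw [Filter.EventuallyEq.fderiv_eq (Filter.eventuallyEq_of_mem (hU.mem_nhds hp) h)]

lemma alg_key (M A ax ay mx my b g d ph l mu K T S t s mux phy bb dx : ℝ)
    (hM : M ≠ 0)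
    (hts : t ^ 2 + s ^ 2 = 1)
    (hST : S + T = 0)
    (hax : ax = M * (ph - b)) (hay : ay = M * (mu - d))
    (h2 : mux - phy = (d * ph - b * mu) * M * t + (ph * my - mu * mx) / M - M * s * T - M * t * K)
    (h3 : bb - dx = (b * mu - d * ph) * M * t + (d * mx - b * my) / M - M * s * S + M * t * K) :
    (A + ((d + mu) * ax - (b + ph) * ay) * s ^ 2 / M
        + ((d + mu) * mx - (b + ph) * my + M * (dx + mux - bb - phy)) * t / M ^ 2
      = g * l - b * mu + (s ^ 2 - t ^ 2) * K - 2 * s * t * T)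
    ↔ (g * l + b * mu - 2 * d * ph = A - K - t * s * (S + T)) := by
  have key :
      (A + ((d + mu) * ax - (b + ph) * ay) * s ^ 2 / M
        + ((d + mu) * mx - (b + ph) * my + M * (dx + mux - bb - phy)) * t / M ^ 2)
      - (g * l - b * mu + (s ^ 2 - t ^ 2) * K - 2 * s * t * T)
      + ((g * l + b * mu - 2 * d * ph) - (A - K - t * s * (S + T))) = 0 := by
    have hS : S = -T := by linarith
    have hmux : mux = phy + ((d * ph - b * mu) * M * t + (ph * my - mu * mx) / M
        - M * s * T - M * t * K) := by linarith
    have hbb : bb = dx + ((b * mu - d * ph) * M * t + (d * mx - b * my) / M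
        - M * s * S + M * t * K) := by linarith
    have hs2 : s ^ 2 = 1 - t ^ 2 := by linarith
    subst hS hmux hbb hax hay
    rw [hs2]
    field_simp
    ring
  constructor <;> intro h <;> linarith [key, h]

/-- under the Wirtinger-angle equations (W) and the Codazzi equations
(C2), (C3), the Ricci equation (R) holds on `U` if and only if the Gauss-type identity
`γλ + βμ − 2δφ = 2(m·m_{xy} − m_x m_y)/m⁴ − K̃ − (tanh α)(sech α)(S + T)` holds on `U`. -/
theorem stmt_10 (U : Set (ℝ × ℝ)) (hU : IsOpen U)
    (m α β γ δ φ lam μ K T S : ℝ × ℝ → ℝ)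
    (hm : ContDiffOn ℝ (⊤ : ℕ∞) m U) (hα : ContDiffOn ℝ (⊤ : ℕ∞) α U) (hβ : ContDiffOn ℝ (⊤ : ℕ∞) β U)
    (hγ : ContDiffOn ℝ (⊤ : ℕ∞) γ U) (hδ : ContDiffOn ℝ (⊤ : ℕ∞) δ U) (hφ : ContDiffOn ℝ (⊤ : ℕ∞) φ U)
    (hlam : ContDiffOn ℝ (⊤ : ℕ∞) lam U) (hμ : ContDiffOn ℝ (⊤ : ℕ∞) μ U) (hK : ContDiffOn ℝ (⊤ : ℕ∞) K U)
    (hT : ContDiffOn ℝ (⊤ : ℕ∞) T U) (hS : ContDiffOn ℝ (⊤ : ℕ∞) S U)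
    (hmpos : ∀ p ∈ U, 0 < m p)
    (hW1 : ∀ p ∈ U, pd1 α p = m p * (φ p - β p))
    (hW2 : ∀ p ∈ U, pd2 α p = m p * (μ p - δ p))
    (hC2 : ∀ p ∈ U, pd1 μ p - pd2 φ p
      = (δ p * φ p - β p * μ p) * m p * Real.tanh (α p)
        + (φ p * pd2 m p - μ p * pd1 m p) / m p
        - m p * (Real.cosh (α p))⁻¹ * T p - m p * Real.tanh (α p) * K p)
    (hC3 : ∀ p ∈ U, pd2 β p - pd1 δ p
      = (β p * μ p - δ p * φ p) * m p * Real.tanh (α p)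
        + (δ p * pd1 m p - β p * pd2 m p) / m p
        - m p * (Real.cosh (α p))⁻¹ * S p + m p * Real.tanh (α p) * K p) :
    (∀ p ∈ U,
      2 * (m p * pd2 (pd1 m) p - pd1 m p * pd2 m p) / (m p)^4
        + ((δ p + μ p) * pd1 α p - (β p + φ p) * pd2 α p) * ((Real.cosh (α p))⁻¹)^2 / m p
        + ((δ p + μ p) * pd1 m p - (β p + φ p) * pd2 m p
            + m p * (pd1 δ p + pd1 μ p - pd2 β p - pd2 φ p)) * Real.tanh (α p) / (m p)^2
      = γ p * lam p - β p * μ p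
        + (((Real.cosh (α p))⁻¹)^2 - (Real.tanh (α p))^2) * K p
        - 2 * (Real.cosh (α p))⁻¹ * Real.tanh (α p) * T p)
    ↔
    (∀ p ∈ U,
      γ p * lam p + β p * μ p - 2 * δ p * φ p
        = 2 * (m p * pd2 (pd1 m) p - pd1 m p * pd2 m p) / (m p)^4 - K p
          - Real.tanh (α p) * (Real.cosh (α p))⁻¹ * (S p + T p)) := by
  -- Step 1: derive S + T = 0 on U from symmetry of second derivatives of α.
  have hST : ∀ p ∈ U, S p + T p = 0 := by
    intro p hp
    have hm0 : m p ≠ 0 := (hmpos p hp).ne'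
    have hc0 : (Real.cosh (α p)) ≠ 0 := (Real.cosh_pos _).ne'
    have e1 : pd2 m p * (φ p - β p) + m p * (pd2 φ p - pd2 β p)
        = pd1 m p * (μ p - δ p) + m p * (pd1 μ p - pd1 δ p) := by
      have hsym := pd_symm hU hα hp
      have hl : pd2 (pd1 α) p = pd2 m p * (φ p - β p) + m p * (pd2 φ p - pd2 β p) := by
        rw [pd2_congr hU hW1 hp]
        exact pd2_mul_sub (pd_diffAt hU hm hp) (pd_diffAt hU hφ hp) (pd_diffAt hU hβ hp)
      have hr : pd1 (pd2 α) p = pd1 m p * (μ p - δ p) + m p * (pd1 μ p - pd1 δ p) := by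
        rw [pd1_congr hU hW2 hp]
        exact pd1_mul_sub (pd_diffAt hU hm hp) (pd_diffAt hU hμ hp) (pd_diffAt hU hδ hp)
      rw [← hl, ← hr, hsym]
    have e2 := hC2 p hp
    have e3 := hC3 p hp
    have e2' : (pd1 μ p - pd2 φ p) * m p
        = (δ p * φ p - β p * μ p) * (m p) ^ 2 * Real.tanh (α p)
          + (φ p * pd2 m p - μ p * pd1 m p)
          - (m p) ^ 2 * (Real.cosh (α p))⁻¹ * T p
          - (m p) ^ 2 * Real.tanh (α p) * K p := by
      rw [e2]; field_simp
    have e3' : (pd2 β p - pd1 δ p) * m p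
        = (β p * μ p - δ p * φ p) * (m p) ^ 2 * Real.tanh (α p)
          + (δ p * pd1 m p - β p * pd2 m p)
          - (m p) ^ 2 * (Real.cosh (α p))⁻¹ * S p
          + (m p) ^ 2 * Real.tanh (α p) * K p := by
      rw [e3]; field_simp
    have hzero : (m p) ^ 2 * (Real.cosh (α p))⁻¹ * (S p + T p) = 0 := by
      linear_combination e2' + e3' + e1
    have hfac : 0 < (m p) ^ 2 * (Real.cosh (α p))⁻¹ := by positivity
    have := mul_eq_zero.mp hzero
    rcases this with h | h
    · exact absurd h hfac.ne'
    · exact h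
  -- Step 2: pointwise algebra.
  constructor <;> intro h p hp <;>
  · have := (alg_key (m p)
        (2 * (m p * pd2 (pd1 m) p - pd1 m p * pd2 m p) / (m p)^4)
        (pd1 α p) (pd2 α p) (pd1 m p) (pd2 m p)
        (β p) (γ p) (δ p) (φ p) (lam p) (μ p) (K p) (T p) (S p)
        (Real.tanh (α p)) ((Real.cosh (α p))⁻¹)
        (pd1 μ p) (pd2 φ p) (pd2 β p) (pd1 δ p)
        (hmpos p hp).ne' (tanh_sq_add_inv_cosh_sq (α p)) (hST p hp)
        (hW1 p hp) (hW2 p hp) (hC2 p hp) (hC3 p hp))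
    first
      | exact this.mp (h p hp)
      | exact this.mpr (h p hp)
end

section
/- Suppose the smooth functions on U satisfy the Wirtinger-angle equations (W), the two Codazzi equations (C2) and (C3) with S = −T, and the Ricci equation (R). Then the Gauss equation (G) holds on U. (This is the analytic core of the theorem that for Lorentz surfaces in Lorentzian Kaehler surfaces, the equation of Gauss is a consequence of the equations of Codazzi and Ricci.) -/
lemma aux_alg (m αx αy β γ δ φ lam μ K T S Q μx φy βy δx Mx My s t : ℝ)
    (hm : m ≠ 0)
    (hst : s^2 + t^2 = 1)
    (hW1 : αx = m*(φ-β)) (hW2 : αy = m*(μ-δ))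
    (hC2 : μx - φy = (δ*φ-β*μ)*m*t + (φ*My - μ*Mx)/m - m*s*T - m*t*K)
    (hC3 : βy - δx = (β*μ-δ*φ)*m*t + (δ*Mx - β*My)/m - m*s*S + m*t*K)
    (hST : S = -T)
    (hR : Q + ((δ+μ)*αx - (β+φ)*αy)*s^2/m + ((δ+μ)*Mx - (β+φ)*My + m*(δx+μx-βy-φy))*t/m^2
      = γ*lam - β*μ + (s^2 - t^2)*K - 2*s*t*T) :
    γ*lam + β*μ - 2*δ*φ = Q - K := by
  subst hST hW1 hW2
  field_simp at hC2 hC3 hR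
  have key : (γ*lam + β*μ - 2*δ*φ) * m^3 = (Q - K) * m^3 := by
    linear_combination -m*hR + t*m*hC2 - t*m*hC3 + (2*(δ*φ - β*μ) - K)*m^3*hst
  exact mul_right_cancel₀ (pow_ne_zero 3 hm) key

lemma sech_sq_add_tanh_sq (x : ℝ) : ((Real.cosh x)⁻¹)^2 + (Real.tanh x)^2 = 1 := by
  have hc : Real.cosh x ≠ 0 := (Real.cosh_pos x).ne'
  rw [Real.tanh_eq_sinh_div_cosh]
  field_simp
  nlinarith [Real.cosh_sq_sub_sinh_sq x]

/-- if the Wirtinger-angle equations (W), the Codazzi equations (C2), (C3)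
with `S = −T`, and the Ricci equation (R) hold on `U`, then the Gauss equation (G) holds
on `U`. (The Gauss equation is a consequence of the Codazzi and Ricci equations for
Lorentz surfaces in Lorentzian Kaehler surfaces.) -/
theorem stmt_12 (U : Set (ℝ × ℝ)) (hU : IsOpen U)
    (m α β γ δ φ lam μ K T S : ℝ × ℝ → ℝ)
    (hm : ContDiffOn ℝ (⊤ : ℕ∞) m U) (hα : ContDiffOn ℝ (⊤ : ℕ∞) α U) (hβ : ContDiffOn ℝ (⊤ : ℕ∞) β U)
    (hγ : ContDiffOn ℝ (⊤ : ℕ∞) γ U) (hδ : ContDiffOn ℝ (⊤ : ℕ∞) δ U) (hφ : ContDiffOn ℝ (⊤ : ℕ∞) φ U)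
    (hlam : ContDiffOn ℝ (⊤ : ℕ∞) lam U) (hμ : ContDiffOn ℝ (⊤ : ℕ∞) μ U) (hK : ContDiffOn ℝ (⊤ : ℕ∞) K U)
    (hT : ContDiffOn ℝ (⊤ : ℕ∞) T U) (hS : ContDiffOn ℝ (⊤ : ℕ∞) S U)
    (hmpos : ∀ p ∈ U, 0 < m p)
    (hW1 : ∀ p ∈ U, pd1 α p = m p * (φ p - β p))
    (hW2 : ∀ p ∈ U, pd2 α p = m p * (μ p - δ p))
    (hC2 : ∀ p ∈ U, pd1 μ p - pd2 φ p
      = (δ p * φ p - β p * μ p) * m p * Real.tanh (α p)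
        + (φ p * pd2 m p - μ p * pd1 m p) / m p
        - m p * (Real.cosh (α p))⁻¹ * T p - m p * Real.tanh (α p) * K p)
    (hC3 : ∀ p ∈ U, pd2 β p - pd1 δ p
      = (β p * μ p - δ p * φ p) * m p * Real.tanh (α p)
        + (δ p * pd1 m p - β p * pd2 m p) / m p
        - m p * (Real.cosh (α p))⁻¹ * S p + m p * Real.tanh (α p) * K p)
    (hST : ∀ p ∈ U, S p = -T p)
    (hR : ∀ p ∈ U,
      2 * (m p * pd2 (pd1 m) p - pd1 m p * pd2 m p) / (m p)^4
        + ((δ p + μ p) * pd1 α p - (β p + φ p) * pd2 α p) * ((Real.cosh (α p))⁻¹)^2 / m p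
        + ((δ p + μ p) * pd1 m p - (β p + φ p) * pd2 m p
            + m p * (pd1 δ p + pd1 μ p - pd2 β p - pd2 φ p)) * Real.tanh (α p) / (m p)^2
      = γ p * lam p - β p * μ p
        + (((Real.cosh (α p))⁻¹)^2 - (Real.tanh (α p))^2) * K p
        - 2 * (Real.cosh (α p))⁻¹ * Real.tanh (α p) * T p) :
    ∀ p ∈ U,
      γ p * lam p + β p * μ p - 2 * δ p * φ p
        = 2 * (m p * pd2 (pd1 m) p - pd1 m p * pd2 m p) / (m p)^4 - K p := by
  intro p hp
  exact aux_alg (m p) (pd1 α p) (pd2 α p) (β p) (γ p) (δ p) (φ p) (lam p) (μ p) (K p)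
    (T p) (S p) (2 * (m p * pd2 (pd1 m) p - pd1 m p * pd2 m p) / (m p)^4)
    (pd1 μ p) (pd2 φ p) (pd2 β p) (pd1 δ p) (pd1 m p) (pd2 m p)
    ((Real.cosh (α p))⁻¹) (Real.tanh (α p))
    (hmpos p hp).ne' (sech_sq_add_tanh_sq (α p)) (hW1 p hp) (hW2 p hp)
    (hC2 p hp) (hC3 p hp) (hST p hp) (hR p hp)
end
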